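/- Let μ be a finite Borel measure on ℝ^d and let R̄_δ(x,y) = C_δ R̄(|x−y|²/(4δ²)) with R̄ : ℝ → ℝ nonnegative, bounded, measurable and C_δ > 0. Set ω̄(x) = ∫ R̄_δ(x,y) dμ(y) and suppose there is c > 0 with ω̄(x) ≥ c for μ-almost every x. For m ∈ L²(μ) define the weighted average m̄(x) = ω̄(x)⁻¹ ∫ m(y) R̄_δ(x,y) dμ(y). Then ∫ (m̄(x) − m(x))² dμ(x) ≤ (1/c) ∬ (m(x) − m(y))² R̄_δ(x,y) dμ(y) dμ(x). -/

import Mathlib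

/-!
Write `ω(x) = ∫ K(x,y) dμ(y)`. Then `m̄(x) − m(x) = ω(x)⁻¹ ∫ (m(y) − m(x)) K(x,y) dμ(y)`, and
Cauchy–Schwarz for the weight `K(x,·)` gives
`(m̄(x) − m(x))² ≤ ω(x)⁻¹ ∫ (m(x) − m(y))² K(x,y) dμ(y) ≤ c⁻¹ ∫ (m(x) − m(y))² K(x,y) dμ(y)`.
Integrating in `x` gives the estimate; boundedness of the kernel and `m ∈ L²(μ)` make every
integral involved finite.
-/

open MeasureTheory Function

section WeightedAverage

variable {α : Type*} [MeasurableSpace α] {μ : Measure α}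

theorem sq_integral_mul_le_integral_mul_integral_sq_mul {f w : α → ℝ} (hw0 : ∀ a, 0 ≤ w a)
    (hW : 0 < ∫ a, w a ∂μ) (hw : Integrable w μ) (hfw : Integrable (fun a => f a * w a) μ)
    (hf2w : Integrable (fun a => f a ^ 2 * w a) μ) :
    (∫ a, f a * w a ∂μ) ^ 2 ≤ (∫ a, w a ∂μ) * ∫ a, f a ^ 2 * w a ∂μ := by
  set W := ∫ a, w a ∂μ
  set B := ∫ a, f a * w a ∂μ
  set A := ∫ a, f a ^ 2 * w a ∂μ
  -- expand `0 ≤ ∫ (f - t)² w` at the minimiser `t = B / W`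
  set t := B / W
  have hexpand : ∫ a, (f a - t) ^ 2 * w a ∂μ = A - 2 * t * B + t ^ 2 * W := by
    have hrw : (fun a => (f a - t) ^ 2 * w a)
        = fun a => f a ^ 2 * w a - 2 * t * (f a * w a) + t ^ 2 * w a := by
      funext a; ring
    rw [hrw, integral_add (hf2w.sub' (hfw.const_mul _)) (hw.const_mul _),
      integral_sub hf2w (hfw.const_mul _), integral_const_mul, integral_const_mul]
  have hnonneg : 0 ≤ A - 2 * t * B + t ^ 2 * W :=
    hexpand ▸ integral_nonneg fun a => mul_nonneg (sq_nonneg _) (hw0 a)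
  have hB : B = t * W := (div_mul_cancel₀ B hW.ne').symm
  nlinarith [mul_le_mul_of_nonneg_left hnonneg hW.le]

theorem sq_inv_integral_mul_integral_mul_sub_le {f w : α → ℝ} (a : ℝ) (hw0 : ∀ y, 0 ≤ w y)
    (hW : 0 < ∫ y, w y ∂μ) (hw : Integrable w μ) (hfw : Integrable (fun y => f y * w y) μ)
    (hf2w : Integrable (fun y => (a - f y) ^ 2 * w y) μ) :
    ((∫ y, w y ∂μ)⁻¹ * (∫ y, f y * w y ∂μ) - a) ^ 2
      ≤ (∫ y, w y ∂μ)⁻¹ * ∫ y, (a - f y) ^ 2 * w y ∂μ := by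
  set W := ∫ y, w y ∂μ
  have hgw : Integrable (fun y => (a - f y) * w y) μ := by
    simpa only [sub_mul] using (hw.const_mul a).sub' hfw
  have hint : ∫ y, (a - f y) * w y ∂μ = a * W - ∫ y, f y * w y ∂μ := by
    simp_rw [sub_mul]
    rw [integral_sub (hw.const_mul a) hfw, integral_const_mul]
  have hCS := sq_integral_mul_le_integral_mul_integral_sq_mul hw0 hW hw hgw hf2w
  calc (W⁻¹ * (∫ y, f y * w y ∂μ) - a) ^ 2 = W⁻¹ ^ 2 * (∫ y, (a - f y) * w y ∂μ) ^ 2 := by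
        rw [hint]; field_simp; ring
    _ ≤ W⁻¹ ^ 2 * (W * ∫ y, (a - f y) ^ 2 * w y ∂μ) := by gcongr
    _ = W⁻¹ * ∫ y, (a - f y) ^ 2 * w y ∂μ := by field_simp

end WeightedAverage

noncomputable def kernelAverage {α : Type*} [MeasurableSpace α] (μ : Measure α)
    (K : α → α → ℝ) (m : α → ℝ) (x : α) : ℝ :=
  (∫ y, K x y ∂μ)⁻¹ * ∫ y, m y * K x y ∂μ

section BoundedKernel

variable {α : Type*} [MeasurableSpace α] {μ : Measure α} [IsFiniteMeasure μ]
  {K : α → α → ℝ} {M : ℝ} {m : α → ℝ}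

theorem integrable_sq_sub_mul_kernel (hK : Measurable (uncurry K)) (hKM : ∀ x y, ‖K x y‖ ≤ M)
    (hm : MemLp m 2 μ) :
    Integrable (fun p : α × α => (m p.1 - m p.2) ^ 2 * K p.1 p.2) (μ.prod μ) :=
  ((hm.comp_fst μ).sub (hm.comp_snd μ)).integrable_sq.mul_bdd hK.aestronglyMeasurable
    (ae_of_all _ fun p => hKM p.1 p.2)

theorem sq_kernelAverage_sub_le (hK : Measurable (uncurry K)) (hK0 : ∀ x y, 0 ≤ K x y)
    (hKM : ∀ x y, ‖K x y‖ ≤ M) (hm : MemLp m 2 μ) {x : α} (hWx : 0 < ∫ y, K x y ∂μ) :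
    (kernelAverage μ K m x - m x) ^ 2 ≤ (∫ y, K x y ∂μ)⁻¹ * ∫ y, (m x - m y) ^ 2 * K x y ∂μ := by
  have hKx : AEStronglyMeasurable (K x) μ := hK.of_uncurry_left.aestronglyMeasurable
  have hbdd : ∀ᵐ y ∂μ, ‖K x y‖ ≤ M := ae_of_all _ (hKM x)
  exact sq_inv_integral_mul_integral_mul_sub_le (m x) (hK0 x) hWx (.of_bound hKx M hbdd)
    ((hm.integrable one_le_two).mul_bdd hKx hbdd)
    (((memLp_const (m x)).sub hm).integrable_sq.mul_bdd hKx hbdd)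

end BoundedKernel

theorem stmt12_general {d : ℕ}
    (μ : Measure (EuclideanSpace ℝ (Fin d))) [IsFiniteMeasure μ]
    (δ Cδ : ℝ) (hCδ : 0 < Cδ)
    (Rb : ℝ → ℝ) (hRbmeas : Measurable Rb) (hRbnn : ∀ r, 0 ≤ Rb r)
    (MRb : ℝ) (hRbbd : ∀ r, Rb r ≤ MRb)
    (Rbδ : EuclideanSpace ℝ (Fin d) → EuclideanSpace ℝ (Fin d) → ℝ)
    (hRbδ : ∀ x y, Rbδ x y = Cδ * Rb (‖x - y‖ ^ 2 / (4 * δ ^ 2)))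
    (ω : EuclideanSpace ℝ (Fin d) → ℝ) (hω : ∀ x, ω x = ∫ y, Rbδ x y ∂μ)
    (c : ℝ) (hc : 0 < c) (hωc : ∀ᵐ x ∂μ, c ≤ ω x)
    (m : EuclideanSpace ℝ (Fin d) → ℝ) (hm : MemLp m 2 μ)
    (mbar : EuclideanSpace ℝ (Fin d) → ℝ)
    (hmbar : ∀ x, mbar x = (ω x)⁻¹ * ∫ y, m y * Rbδ x y ∂μ) :
    (∫ x, (mbar x - m x) ^ 2 ∂μ)
      ≤ (1 / c) * ∫ x, ∫ y, (m x - m y) ^ 2 * Rbδ x y ∂μ ∂μ := by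
  have hK0 : ∀ x y, 0 ≤ Rbδ x y := fun x y => hRbδ x y ▸ mul_nonneg hCδ.le (hRbnn _)
  have hKM : ∀ x y, ‖Rbδ x y‖ ≤ Cδ * MRb := fun x y => by
    rw [Real.norm_of_nonneg (hK0 x y), hRbδ]
    exact mul_le_mul_of_nonneg_left (hRbbd _) hCδ.le
  have hK : Measurable (uncurry Rbδ) := by
    rw [show uncurry Rbδ = fun p => Cδ * Rb (‖p.1 - p.2‖ ^ 2 / (4 * δ ^ 2)) from
      funext fun p => hRbδ p.1 p.2]
    fun_prop
  have hpointwise : ∀ᵐ x ∂μ, (mbar x - m x) ^ 2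
      ≤ 1 / c * ∫ y, (m x - m y) ^ 2 * Rbδ x y ∂μ := by
    filter_upwards [hωc] with x hx
    rw [hω] at hx
    rw [show mbar x = kernelAverage μ Rbδ m x by rw [hmbar, hω]; rfl]
    refine (sq_kernelAverage_sub_le hK hK0 hKM hm (hc.trans_le hx)).trans ?_
    rw [one_div]
    gcongr
    exact integral_nonneg fun y => mul_nonneg (sq_nonneg _) (hK0 x y)
  calc (∫ x, (mbar x - m x) ^ 2 ∂μ)
      ≤ ∫ x, 1 / c * ∫ y, (m x - m y) ^ 2 * Rbδ x y ∂μ ∂μ :=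
        integral_mono_of_nonneg (ae_of_all _ fun x => sq_nonneg _)
          ((integrable_sq_sub_mul_kernel hK hKM hm).integral_prod_left.const_mul _) hpointwise
    _ = 1 / c * ∫ x, ∫ y, (m x - m y) ^ 2 * Rbδ x y ∂μ ∂μ := integral_const_mul _ _

/-- the weighted kernel average `m̄(x) = ω̄(x)⁻¹ ∫ m(y) R̄_δ(x,y) dμ(y)`
satisfies `∫ (m̄ − m)² dμ ≤ (1/c) ∬ (m(x) − m(y))² R̄_δ(x,y) dμ dμ` whenever
`ω̄ ≥ c > 0` μ-a.e. -/
theorem stmt12 {d : ℕ} (hd : 1 ≤ d)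
    (μ : Measure (EuclideanSpace ℝ (Fin d))) [IsFiniteMeasure μ]
    (δ Cδ : ℝ) (hδ : 0 < δ) (hCδ : 0 < Cδ)
    (Rb : ℝ → ℝ) (hRbmeas : Measurable Rb) (hRbnn : ∀ r, 0 ≤ Rb r)
    (MRb : ℝ) (hRbbd : ∀ r, Rb r ≤ MRb)
    (Rbδ : EuclideanSpace ℝ (Fin d) → EuclideanSpace ℝ (Fin d) → ℝ)
    (hRbδ : ∀ x y, Rbδ x y = Cδ * Rb (‖x - y‖ ^ 2 / (4 * δ ^ 2)))
    (ω : EuclideanSpace ℝ (Fin d) → ℝ) (hω : ∀ x, ω x = ∫ y, Rbδ x y ∂μ)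
    (c : ℝ) (hc : 0 < c) (hωc : ∀ᵐ x ∂μ, c ≤ ω x)
    (m : EuclideanSpace ℝ (Fin d) → ℝ) (hm : MemLp m 2 μ)
    (mbar : EuclideanSpace ℝ (Fin d) → ℝ)
    (hmbar : ∀ x, mbar x = (ω x)⁻¹ * ∫ y, m y * Rbδ x y ∂μ) :
    (∫ x, (mbar x - m x) ^ 2 ∂μ)
      ≤ (1 / c) * ∫ x, ∫ y, (m x - m y) ^ 2 * Rbδ x y ∂μ ∂μ :=
  stmt12_general μ δ Cδ hCδ Rb hRbmeas hRbnn MRb hRbbd Rbδ hRbδ ω hω c hc hωc m hm mbar hmbar
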